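/- Let q = 3^m, and let f(x) = x^{q+2} on F_{q^2}. Then its differential spectrum is ω_0 = (q^2+q-2)/2, ω_2 = (q^2-q)/2, ω_q = 1, where ω_i = #{b ∈ F_{q^2} : δ_f(1,b) = i}; in particular the differential uniformity of f equals q and f is locally APN. -/

import Mathlib

/-!
In characteristic 3, `(x + 1) ^ (q + 2) - x ^ (q + 2) = y * (y - y ^ q) + 1` with `y = x - 1`,
so `δ_f(1, b)` counts the solutions of `y * (y - y ^ q) = b - 1`. For `b = 1` these are the `q`
elements of `F_q`. For `c = b - 1 ≠ 0`, `t = y - y ^ q` satisfies `t ^ 2 = c + c ^ q` and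
`y = c / t`, so the solutions form either the empty set or a pair `{y, -y}`. Thus `δ_f(1, ·)`
takes the value `q` once and otherwise only the values `0` and `2`, and the spectrum follows
from `∑ b, δ_f(1, b) = q ^ 2`.
-/

theorem sum_card_fiber {α β : Type*} [Fintype α] [Fintype β] (g : α → β) :
    ∑ b, Nat.card {x // g x = b} = Fintype.card α := by
  rw [← Nat.card_sigma, Nat.card_congr (Equiv.sigmaFiberEquiv g), Nat.card_eq_fintype_card]

theorem exists_ne_ne_of_two_lt_card {α : Type*} {P : α → Prop} (a₁ a₂ : α)
    (h : 2 < Nat.card {b // P b}) : ∃ b, P b ∧ b ≠ a₁ ∧ b ≠ a₂ := by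
  have hpair : ({a₁, a₂} : Set α).ncard ≤ 2 :=
    (Set.ncard_insert_le _ _).trans (by rw [Set.ncard_singleton])
  obtain ⟨b, hb, hb'⟩ := Set.exists_mem_notMem_of_ncard_lt_ncard (t := {b | P b})
    (hpair.trans_lt h)
  simp only [Set.mem_insert_iff, Set.mem_singleton_iff, not_or] at hb'
  exact ⟨b, hb, hb'⟩

open Finset in
theorem card_spectrum_of_eq_zero_or_two {β : Type*} [Fintype β] (N : β → ℕ) (b₀ : β) {r : ℕ}
    (hr₀ : r ≠ 0) (hr₂ : r ≠ 2) (hb₀ : N b₀ = r) (hN : ∀ b ≠ b₀, N b = 0 ∨ N b = 2) :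
    Nat.card {b // N b = r} = 1 ∧
    2 * Nat.card {b // N b = 2} + r = ∑ b, N b ∧
    Nat.card {b // N b = 0} + Nat.card {b // N b = 2} + 1 = Fintype.card β := by
  classical
  have hsplit (b : β) : N b = (if b = b₀ then r else 0) + 2 * (if N b = 2 then 1 else 0) := by
    by_cases hb : b = b₀
    · subst hb; rw [if_pos rfl]; split_ifs <;> omega
    · have := hN b hb; split_ifs <;> omega
  have hone (b : β) :
      1 = (if N b = 0 then 1 else 0) + (if N b = 2 then 1 else 0) + (if b = b₀ then 1 else 0) := by
    by_cases hb : b = b₀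
    · subst hb; rw [if_pos rfl]; split_ifs <;> omega
    · have := hN b hb; split_ifs <;> omega
  simp only [Nat.card_eq_fintype_card, Fintype.card_subtype]
  refine ⟨?_, ?_, ?_⟩
  · rw [card_eq_one]
    refine ⟨b₀, ?_⟩
    ext b
    simp only [mem_filter, mem_univ, true_and, mem_singleton]
    constructor
    · intro h; by_contra hb; have := hN b hb; omega
    · rintro rfl; exact hb₀
  · rw [sum_congr rfl fun b _ => hsplit b, sum_add_distrib, ← mul_sum, ← card_filter, sum_ite_eq']
    simp only [mem_univ, if_true]; ring
  · calc #{b | N b = 0} + #{b | N b = 2} + 1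
        = ∑ b : β, ((if N b = 0 then 1 else 0) + (if N b = 2 then 1 else 0) +
            (if b = b₀ then 1 else 0)) := by
          rw [sum_add_distrib, sum_add_distrib, ← card_filter, ← card_filter, sum_ite_eq']
          simp only [mem_univ, if_true]
      _ = Fintype.card β := by simp only [← hone, sum_const, card_univ, smul_eq_mul, mul_one]

open Polynomial in
theorem card_pow_eq_mul_self_le {R : Type*} [CommRing R] [IsDomain R] {n : ℕ} (hn : 2 ≤ n)
    (a : R) : Nat.card {x : R // x ^ n = a * x} ≤ n := by
  set P : R[X] := X ^ n - C a * X
  have hdeg : P.natDegree = n := by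
    unfold P; compute_degree!
    · simp [show n ≠ 1 by omega]
    all_goals omega
  have hP : P ≠ 0 := ne_zero_of_natDegree_gt (n := 0) (by omega)
  calc Nat.card {x : R // x ^ n = a * x} ≤ (P.rootSet R).ncard := by
        rw [← Nat.card_coe_set_eq]
        refine Nat.card_mono (Set.toFinite _) fun x (hx : x ^ n = a * x) => ?_
        simp [P, mem_rootSet, hP, hx]
    _ ≤ n := hdeg ▸ ncard_rootSet_le P R

theorem pow_pow_eq_self_of_card_eq_sq {K : Type*} [Field K] [Fintype K] {q : ℕ}
    (hK : Fintype.card K = q ^ 2) (x : K) : (x ^ q) ^ q = x := by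
  rw [← pow_mul, ← sq, ← hK, FiniteField.pow_card]

section Frobenius

variable {K : Type*} [Field K] [Fintype K] {p m : ℕ} [ExpChar K p]

/-- `x ↦ x ^ q - x` has the fixed points as kernel and maps into `{y | y ^ q = -y}`; both sets
have at most `q` elements, while `|ker| * |range| = q ^ 2`. -/
theorem card_pow_eq_self_of_card_eq_sq (hK : Fintype.card K = (p ^ m) ^ 2) :
    Nat.card {x : K // x ^ p ^ m = x} = p ^ m := by
  set q := p ^ m
  have hq : 2 ≤ q := by
    have := Fintype.one_lt_card (α := K)
    nlinarith
  let L : K →+ K := (iterateFrobenius K p m).toAddMonoidHom - AddMonoidHom.id K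
  have hker : Nat.card L.ker = Nat.card {x : K // x ^ q = x} :=
    Nat.card_congr <| Equiv.subtypeEquivRight fun x => by
      simp [L, AddMonoidHom.mem_ker, iterateFrobenius_def, sub_eq_zero, q]
  have hrange : Nat.card L.range ≤ q := by
    refine le_trans (Nat.card_mono (Set.toFinite _) ?_) (card_pow_eq_mul_self_le hq (-1))
    rintro _ ⟨x, rfl⟩
    show (x ^ q - x) ^ q = -1 * (x ^ q - x)
    rw [sub_pow_expChar_pow, pow_pow_eq_self_of_card_eq_sq hK]
    ring
  have hker_le : Nat.card {x : K // x ^ q = x} ≤ q := by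
    simpa using card_pow_eq_mul_self_le hq (1 : K)
  have hprod : Nat.card L.ker * Nat.card L.range = q ^ 2 := by
    rw [← AddSubgroup.index_ker, AddSubgroup.card_mul_index, Nat.card_eq_fintype_card, hK]
  rw [hker] at hprod
  nlinarith

theorem card_mul_sub_pow_eq_zero (hK : Fintype.card K = (p ^ m) ^ 2) :
    Nat.card {y : K // y * (y - y ^ p ^ m) = 0} = p ^ m := by
  refine (Nat.card_congr (Equiv.subtypeEquivRight fun y => ?_)).trans
    (card_pow_eq_self_of_card_eq_sq hK)
  rw [mul_eq_zero, sub_eq_zero, @eq_comm _ y (y ^ p ^ m)]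
  refine or_iff_right_of_imp fun hy => ?_
  rw [hy, zero_pow (expChar_pow_pos K p m).ne']

theorem sq_sub_pow_eq_add_pow (hK : Fintype.card K = (p ^ m) ^ 2) (y : K) :
    (y - y ^ p ^ m) ^ 2 = y * (y - y ^ p ^ m) + (y * (y - y ^ p ^ m)) ^ p ^ m := by
  rw [mul_pow, sub_pow_expChar_pow, pow_pow_eq_self_of_card_eq_sq hK]
  ring

theorem eq_or_eq_neg_of_mul_sub_pow_eq (hK : Fintype.card K = (p ^ m) ^ 2) {c y y₀ : K}
    (hc : c ≠ 0) (hy : y * (y - y ^ p ^ m) = c) (hy₀ : y₀ * (y₀ - y₀ ^ p ^ m) = c) :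
    y = y₀ ∨ y = -y₀ := by
  have ht : y - y ^ p ^ m ≠ 0 := fun h => hc (by rw [← hy, h, mul_zero])
  have ht₀ : y₀ - y₀ ^ p ^ m ≠ 0 := fun h => hc (by rw [← hy₀, h, mul_zero])
  rw [eq_div_of_mul_eq ht hy, eq_div_of_mul_eq ht₀ hy₀, ← div_neg]
  have hsq : (y - y ^ p ^ m) ^ 2 = (y₀ - y₀ ^ p ^ m) ^ 2 := by
    rw [sq_sub_pow_eq_add_pow hK, sq_sub_pow_eq_add_pow hK, hy, hy₀]
  rcases sq_eq_sq_iff_eq_or_eq_neg.mp hsq with h | h <;> rw [h] <;> simp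

theorem card_mul_sub_pow_eq_zero_or_two (hK : Fintype.card K = (p ^ m) ^ 2) (h2 : (2 : K) ≠ 0)
    {c : K} (hc : c ≠ 0) :
    Nat.card {y : K // y * (y - y ^ p ^ m) = c} = 0 ∨
      Nat.card {y : K // y * (y - y ^ p ^ m) = c} = 2 := by
  by_cases hex : ∃ y₀, y₀ * (y₀ - y₀ ^ p ^ m) = c
  · obtain ⟨y₀, hy₀⟩ := hex
    right
    have hneg : (-y₀) * (-y₀ - (-y₀) ^ p ^ m) = c := by
      rw [← hy₀, ← iterateFrobenius_def, map_neg, iterateFrobenius_def]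
      ring
    have hy₀_ne : y₀ ≠ -y₀ := by
      intro h
      have : y₀ = 0 :=
        (mul_eq_zero.mp (by linear_combination h : (2 : K) * y₀ = 0)).resolve_left h2
      exact hc (by rw [← hy₀, this, zero_mul])
    have hset : {y : K | y * (y - y ^ p ^ m) = c} = {y₀, -y₀} := by
      ext y
      refine ⟨fun hy => eq_or_eq_neg_of_mul_sub_pow_eq hK hc hy hy₀, ?_⟩
      rintro (rfl | rfl)
      exacts [hy₀, hneg]
    rw [← Set.ncard_pair hy₀_ne, ← hset, ← Nat.card_coe_set_eq]
    rfl
  · left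
    have : IsEmpty {y : K // y * (y - y ^ p ^ m) = c} := ⟨fun y => hex ⟨y.1, y.2⟩⟩
    exact Nat.card_of_isEmpty

end Frobenius

theorem add_one_pow_sub_pow_eq {K : Type*} [Field K] [CharP K 3] (m : ℕ) (x : K) :
    (x + 1) ^ (3 ^ m + 2) - x ^ (3 ^ m + 2) = (x - 1) * ((x - 1) - (x - 1) ^ 3 ^ m) + 1 := by
  have h3 : (3 : K) = 0 := CharP.cast_eq_zero K 3
  rw [pow_add, pow_add, add_pow_char_pow, sub_pow_char_pow, one_pow]
  linear_combination (x ^ 3 ^ m * x + x) * h3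

theorem card_add_one_pow_sub_pow_eq {K : Type*} [Field K] [CharP K 3] (m : ℕ) (b : K) :
    Nat.card {x : K // (x + 1) ^ (3 ^ m + 2) - x ^ (3 ^ m + 2) = b} =
      Nat.card {y : K // y * (y - y ^ 3 ^ m) = b - 1} :=
  Nat.card_congr <| Equiv.subtypeEquiv (Equiv.subRight 1) fun x => by
    rw [add_one_pow_sub_pow_eq, Equiv.subRight_apply, eq_sub_iff_add_eq]

/-- Differential spectrum of x^{q+2} over F_{q²} when q = 3^m:
ω₀ = (q²+q-2)/2, ω₂ = (q²-q)/2, ω_q = 1; the differential uniformity equals q,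
and f is locally APN: max{δ_f(1,b) : b ∉ F_3} = 2. -/
theorem diff_spectrum_char_three (m q : ℕ) (hm : 0 < m) (hq : q = 3 ^ m)
    (K : Type*) [Field K] [Fintype K] (hK : Fintype.card K = q ^ 2) :
    2 * Nat.card {b : K //
        Nat.card {x : K // (x + 1) ^ (q + 2) - x ^ (q + 2) = b} = 0} + 2
      = q ^ 2 + q ∧
    2 * Nat.card {b : K //
        Nat.card {x : K // (x + 1) ^ (q + 2) - x ^ (q + 2) = b} = 2}
      = q ^ 2 - q ∧
    Nat.card {b : K //
        Nat.card {x : K // (x + 1) ^ (q + 2) - x ^ (q + 2) = b} = q} = 1 ∧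
    (∀ b : K, Nat.card {x : K // (x + 1) ^ (q + 2) - x ^ (q + 2) = b} ≤ q) ∧
    (∀ b : K, b ≠ 0 → b ≠ 1 → b ≠ -1 →
      Nat.card {x : K // (x + 1) ^ (q + 2) - x ^ (q + 2) = b} ≤ 2) ∧
    (∃ b : K, b ≠ 0 ∧ b ≠ 1 ∧ b ≠ -1 ∧
      Nat.card {x : K // (x + 1) ^ (q + 2) - x ^ (q + 2) = b} = 2) := by
  subst hq
  have : CharP K 3 := charP_of_card_eq_prime_pow (f := 2 * m) (by rw [hK, ← pow_mul, mul_comm])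
  have hq3 : 3 ≤ 3 ^ m := Nat.le_self_pow hm.ne' 3
  set N : K → ℕ := fun b => Nat.card {x : K // (x + 1) ^ (3 ^ m + 2) - x ^ (3 ^ m + 2) = b}
  have hN₁ : N 1 = 3 ^ m := by
    simp only [N, card_add_one_pow_sub_pow_eq, sub_self, card_mul_sub_pow_eq_zero hK]
  have hN (b : K) (hb : b ≠ 1) : N b = 0 ∨ N b = 2 := by
    simp only [N, card_add_one_pow_sub_pow_eq]
    exact card_mul_sub_pow_eq_zero_or_two hK
      (Ring.two_ne_zero (by rw [ringChar.eq K 3]; decide)) (sub_ne_zero.mpr hb)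
  obtain ⟨hωq, hω₂, hω₀⟩ := card_spectrum_of_eq_zero_or_two N 1 (by omega) (by omega) hN₁ hN
  rw [sum_card_fiber, hK] at hω₂
  rw [hK] at hω₀
  have hω₂_gt : 2 < Nat.card {b // N b = 2} := by nlinarith
  simp only [N] at hωq hω₂ hω₀ hN₁ hN hω₂_gt
  refine ⟨by omega, by omega, hωq, fun b => ?_, fun b _ hb _ => ?_, ?_⟩
  · by_cases hb : b = 1
    · rw [hb, hN₁]
    · have := hN b hb; omega
  · have := hN b hb; omega
  · obtain ⟨b, hb, hb₀, hb₁⟩ := exists_ne_ne_of_two_lt_card 0 (-1) hω₂_gt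
    refine ⟨b, hb₀, fun h => ?_, hb₁, hb⟩
    rw [h, hN₁] at hb
    omega
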